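/- Every matrix A ∈ Skew(2n,F) can be written in the form A = g · diag(ϖ^{-k₁}J, ϖ^{-k₂}J, …, ϖ^{-k_n}J) · g^t for some g ∈ GL(2n,O_F) and some k₁ ≥ k₂ ≥ … ≥ k_n with each k_i ∈ ℤ∪{-∞}. -/

import Mathlib

/-!
Common setup: `F` is a non-discrete non-Archimedean locally compact field, encoded as a
nontrivially normed field which is ultrametric and locally compact.  Its ring of integers is
`O_F = {x : F | ‖x‖ ≤ 1}`.  The condition `char F ≠ 2` is encoded as `(2 : F) ≠ 0`.
-/

open MeasureTheory Metric Matrix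
open scoped symmDiff ENNReal

noncomputable section
set_option linter.unusedSectionVars false

namespace SkewPaper

variable (F : Type) [NontriviallyNormedField F] [IsUltrametricDist F]
  [LocallyCompactSpace F] [SecondCountableTopology F] [MeasurableSpace F] [BorelSpace F]

/-- The infinite identity matrix. -/
def idM : ℕ → ℕ → F := fun i j => if i = j then 1 else 0

/-- Product of infinite matrices, defined via `tsum` (a finite sum whenever the supports
involved are finite, e.g. for matrices that are eventually the identity). -/
def mulInf (g h : ℕ → ℕ → F) : ℕ → ℕ → F := fun i j => ∑' k, g i k * h k j

/-- All entries of `g` lie in the ring of integers `O_F = {x | ‖x‖ ≤ 1}`. -/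
def IsIntegralM (g : ℕ → ℕ → F) : Prop := ∀ i j, ‖g i j‖ ≤ 1

/-- `g` coincides with the identity matrix outside a finite upper-left corner. -/
def EventuallyId (g : ℕ → ℕ → F) : Prop :=
  ∃ N, ∀ i j, N ≤ i ∨ N ≤ j → g i j = idM F i j

/-- The group `GL(∞, O_F)`: infinite matrices over `O_F`, eventually equal to the identity,
invertible with an inverse of the same kind. -/
def GLinf : Set (ℕ → ℕ → F) :=
  {g | IsIntegralM F g ∧ EventuallyId F g ∧
    ∃ h, IsIntegralM F h ∧ EventuallyId F h ∧ mulInf F g h = idM F ∧ mulInf F h g = idM F}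

/-- `A` is skew-symmetric: `A j i = - A i j` for all `i, j`. -/
def IsSkew (A : ℕ → ℕ → F) : Prop := ∀ i j, A j i = - A i j

/-- The space `Skew(ℕ, F)` of infinite skew-symmetric matrices over `F`. -/
def SkewSet : Set (ℕ → ℕ → F) := {A | IsSkew F A}

/-- `Skew(ℕ, F)` as a topological/measurable space. -/
abbrev SkewM := ↥(SkewSet F)

/-- `A` is symmetric. -/
def IsSym (A : ℕ → ℕ → F) : Prop := ∀ i j, A j i = A i j

/-- The space `Sym(ℕ, F)` of infinite symmetric matrices over `F`. -/
def SymSet : Set (ℕ → ℕ → F) := {A | IsSym F A}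

/-- `Sym(ℕ, F)` as a topological/measurable space. -/
abbrev SymM := ↥(SymSet F)

/-- The action `A ↦ g A gᵗ` of `GL(∞, O_F)` on `Skew(ℕ, F)`:
`(g A gᵗ)_{ij} = ∑_{k,l} g_{ik} g_{jl} A_{kl}`. -/
def skewAct (g : ℕ → ℕ → F) (A : SkewM F) : SkewM F :=
  ⟨fun i j => ∑' p : ℕ × ℕ, g i p.1 * g j p.2 * A.1 p.1 p.2, by
    intro i j
    have h1 : (∑' p : ℕ × ℕ, g j p.1 * g i p.2 * A.1 p.1 p.2)
        = ∑' p : ℕ × ℕ, g j p.2 * g i p.1 * A.1 p.2 p.1 :=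
      ((Equiv.prodComm ℕ ℕ).tsum_eq (fun p : ℕ × ℕ => g j p.1 * g i p.2 * A.1 p.1 p.2)).symm
    have h2 : (∑' p : ℕ × ℕ, g j p.2 * g i p.1 * A.1 p.2 p.1)
        = ∑' p : ℕ × ℕ, - (g i p.1 * g j p.2 * A.1 p.1 p.2) := by
      refine tsum_congr fun p => ?_
      rw [A.2 p.1 p.2]; ring
    simp only [h1, h2, tsum_neg]⟩

/-- The action `A ↦ g A gᵗ` of `GL(∞, O_F)` on `Sym(ℕ, F)`. -/
def symAct (g : ℕ → ℕ → F) (A : SymM F) : SymM F :=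
  ⟨fun i j => ∑' p : ℕ × ℕ, g i p.1 * g j p.2 * A.1 p.1 p.2, by
    intro i j
    have h1 : (∑' p : ℕ × ℕ, g j p.1 * g i p.2 * A.1 p.1 p.2)
        = ∑' p : ℕ × ℕ, g j p.2 * g i p.1 * A.1 p.2 p.1 :=
      ((Equiv.prodComm ℕ ℕ).tsum_eq (fun p : ℕ × ℕ => g j p.1 * g i p.2 * A.1 p.1 p.2)).symm
    have h2 : (∑' p : ℕ × ℕ, g j p.2 * g i p.1 * A.1 p.2 p.1)
        = ∑' p : ℕ × ℕ, g i p.1 * g j p.2 * A.1 p.1 p.2 := by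
      refine tsum_congr fun p => ?_
      rw [A.2 p.1 p.2]; ring
    simp only [h1, h2]⟩

/-- A Borel probability measure on `Skew(ℕ, F)` is `GL(∞, O_F)`-invariant. -/
def IsInvSkew (μ : Measure (SkewM F)) : Prop :=
  ∀ g ∈ GLinf F, μ.map (skewAct F g) = μ

/-- A Borel measure on `Skew(ℕ, F)` is ergodic for the `GL(∞, O_F)`-action: any Borel set
`E` with `μ(E ∆ gE) = 0` for all `g` has measure `0` or `1`. -/
def IsErgSkew (μ : Measure (SkewM F)) : Prop :=
  ∀ E : Set (SkewM F), MeasurableSet E →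
    (∀ g ∈ GLinf F, μ (E ∆ (skewAct F g ⁻¹' E)) = 0) → μ E = 0 ∨ μ E = 1

/-- A Borel probability measure on `Mat(ℕ, F)` is `GL(∞, O_F) × GL(∞, O_F)`-invariant
(for the action `(g₁, g₂) · X = g₁ X g₂⁻¹`; equivalently, `X ↦ g₁ X g₂` preserves `σ` for
all `g₁, g₂ ∈ GL(∞, O_F)`). -/
def IsInvMat (σ : Measure (ℕ → ℕ → F)) : Prop :=
  ∀ g₁ ∈ GLinf F, ∀ g₂ ∈ GLinf F,
    σ.map (fun X => mulInf F (mulInf F g₁ X) g₂) = σ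

/-- A Borel probability measure on `Sym(ℕ, F)` is `GL(∞, O_F)`-invariant. -/
def IsInvSym (μ : Measure (SymM F)) : Prop :=
  ∀ g ∈ GLinf F, μ.map (symAct F g) = μ

/-- The map `τ(X) = X - Xᵗ` from `Mat(ℕ, F)` to `Skew(ℕ, F)`. -/
def tauMap (X : ℕ → ℕ → F) : SkewM F :=
  ⟨fun i j => X i j - X j i, by intro i j; ring⟩

/-- The map `X ↦ X + Xᵗ` from `Mat(ℕ, F)` to `Sym(ℕ, F)`. -/
def sigmaMap (X : ℕ → ℕ → F) : SymM F :=
  ⟨fun i j => X i j + X j i, by intro i j; ring⟩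

/-! ### The parameter space `Δ` and the measures `μ_𝕜` -/

/-- Topologize `ℤ ∪ {-∞}` by its order topology: integer points are isolated and the
intervals `[-∞, a)` form a neighbourhood basis of `-∞`. -/
instance : TopologicalSpace (WithBot ℤ) := Preorder.topology _
instance : OrderTopology (WithBot ℤ) := ⟨rfl⟩

/-- The space `Δ` of nonincreasing sequences `(k_j)` with `k_j ∈ ℤ ∪ {-∞}`, topologized as
a subspace of the product `(ℤ ∪ {-∞})^ℕ`. -/
abbrev DeltaSet := {k : ℕ → WithBot ℤ // Antitone k}

/-- `ppow ϖ m = ϖ^(-m)`, with the convention `ϖ^(-(-∞)) = ϖ^∞ = 0`. -/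
def ppow (ϖ : F) : WithBot ℤ → F := fun m => WithBot.recBotCoe 0 (fun z : ℤ => ϖ ^ (-z)) m

/-- The limit `k = lim_n k_n` of a nonincreasing sequence in `ℤ ∪ {-∞}` (its infimum). -/
def klim (k : ℕ → WithBot ℤ) : WithBot ℤ := ⨅ n, k n

/-- The sample space carrying the independent uniform random variables
`X_i^{(n)} = ω (0, n, i)`, `Y_i^{(n)} = ω (1, n, i)` and `Z_{ij} = ω (2, i, j)`. -/
abbrev SampleSpace := (Fin 3 × ℕ × ℕ) → F

/-- The random infinite skew-symmetric matrix
`A_𝕜 = ∑_{n : k_n > k} ϖ^{-k_n} [X_i^{(n)} Y_j^{(n)} - X_j^{(n)} Y_i^{(n)}]_{i,j} + ϖ^{-k} Z`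
of Definition 1.1. -/
def Amat (ϖ : F) (k : ℕ → WithBot ℤ) (ω : SampleSpace F) : ℕ → ℕ → F := fun i j =>
  (∑' n : ℕ, if klim k < k n then
      ppow F ϖ (k n) * (ω (0, n, i) * ω (1, n, j) - ω (0, n, j) * ω (1, n, i)) else 0)
  + ppow F ϖ (klim k) *
      (if i < j then ω (2, i, j) else if j < i then - ω (2, j, i) else 0)

lemma Amat_isSkew (ϖ : F) (k : ℕ → WithBot ℤ) (ω : SampleSpace F) :
    Amat F ϖ k ω ∈ SkewSet F := by
  intro i j
  unfold Amat
  have h1 : (∑' n : ℕ, if klim k < k n then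
      ppow F ϖ (k n) * (ω (0, n, j) * ω (1, n, i) - ω (0, n, i) * ω (1, n, j)) else 0)
      = ∑' n : ℕ, - (if klim k < k n then
      ppow F ϖ (k n) * (ω (0, n, i) * ω (1, n, j) - ω (0, n, j) * ω (1, n, i)) else 0) := by
    refine tsum_congr fun n => ?_
    split <;> ring
  have h2 : (if j < i then ω (2, j, i) else if i < j then - ω (2, i, j) else 0)
      = - (if i < j then ω (2, i, j) else if j < i then - ω (2, j, i) else 0) := by
    rcases lt_trichotomy i j with h | h | h
    · simp [h, not_lt_of_gt h]
    · simp [h, lt_irrefl]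
    · simp [h, not_lt_of_gt h]
  rw [h1, h2, tsum_neg]
  ring

/-- The random matrix `A_𝕜`, as a `Skew(ℕ, F)`-valued random variable. -/
def AmatS (ϖ : F) (𝕜 : DeltaSet) (ω : SampleSpace F) : SkewM F :=
  ⟨Amat F ϖ 𝕜.1 ω, Amat_isSkew F ϖ 𝕜.1 ω⟩

/-- The measure `μ_𝕜`: the law of the random skew-symmetric matrix `A_𝕜`. -/
def muK (ϖ : F) (P : Measure (SampleSpace F)) (𝕜 : DeltaSet) : Measure (SkewM F) :=
  P.map (AmatS F ϖ 𝕜)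

/-- `ν` is the uniform (normalized Haar) probability measure on the ring of integers
`O_F`: a probability measure carried by `O_F` and invariant under all translations by
elements of `O_F`. -/
def IsUnifO (ν : Measure F) : Prop :=
  IsProbabilityMeasure ν ∧ ν {x : F | ¬ ‖x‖ ≤ 1} = 0 ∧
    ∀ a : F, ‖a‖ ≤ 1 → ν.map (fun x => a + x) = ν

/-- `P` is the joint law of countably many independent random variables, each sampled
uniformly from `O_F`. -/
def IsIIDUnifO (P : Measure (SampleSpace F)) : Prop :=
  IsProbabilityMeasure P ∧
  ProbabilityTheory.iIndepFun
    (fun idx => fun ω : SampleSpace F => ω idx) P ∧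
  ∀ idx : Fin 3 × ℕ × ℕ, IsUnifO F (P.map (fun ω : SampleSpace F => ω idx))

/-- `ϖ` is a uniformizer of `F`: a generator of the maximal ideal `m = {x | ‖x‖ < 1}`
of `O_F`. -/
def IsUniformizer (ϖ : F) : Prop :=
  ϖ ≠ 0 ∧ ‖ϖ‖ < 1 ∧ ∀ x : F, ‖x‖ < 1 → ∃ y : F, ‖y‖ ≤ 1 ∧ x = ϖ * y

/-- The residue field `O_F/m` has `q` elements; for the normalized absolute value this is
recorded by `‖ϖ‖ = q⁻¹`, together with the fact that the value group is `q^ℤ`. -/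
def IsResidueCard (ϖ : F) (q : ℕ) : Prop :=
  1 < q ∧ ‖ϖ‖ = (q : ℝ)⁻¹ ∧ ∀ x : F, x ≠ 0 → ∃ m : ℤ, ‖x‖ = (q : ℝ) ^ m

/-! ### Characteristic functions -/

/-- `tr(X · S)` for infinite matrices, via `tsum` (a finite sum when `X` has finitely many
nonzero entries). -/
def trPair (X S : ℕ → ℕ → F) : F := ∑' p : ℕ × ℕ, X p.1 p.2 * S p.2 p.1

/-- The characteristic function `μ̂(X) = ∫ χ(tr(X S)) dμ(S)` of a measure on `Skew(ℕ, F)`. -/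
def charFunSkew (χ : AddChar F ℂ) (μ : Measure (SkewM F)) (X : ℕ → ℕ → F) : ℂ :=
  ∫ S, χ (trPair F X S.1) ∂μ

/-- The characteristic function `σ̂(X) = ∫ χ(tr(X M)) dσ(M)` of a measure on `Mat(ℕ, F)`. -/
def charFunMat (χ : AddChar F ℂ) (σ : Measure (ℕ → ℕ → F)) (X : ℕ → ℕ → F) : ℂ :=
  ∫ M, χ (trPair F X M) ∂σ

/-- `χ` is a (continuous) additive character of `F` with `χ ≡ 1` on `O_F` and `χ`
nonconstant on `ϖ⁻¹ O_F`. -/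
def IsGoodChar (ϖ : F) (χ : AddChar F ℂ) : Prop :=
  Continuous χ ∧ (∀ x : F, ‖x‖ ≤ 1 → χ x = 1) ∧ ∃ x : F, ‖ϖ * x‖ ≤ 1 ∧ χ x ≠ 1

/-! ### Finite matrices, Haar measures, orbital measures -/

instance (m n : ℕ) : MeasurableSpace (Matrix (Fin m) (Fin n) F) :=
  inferInstanceAs (MeasurableSpace (Fin m → Fin n → F))

instance (m n : ℕ) : TopologicalSpace (Matrix (Fin m) (Fin n) F) :=
  inferInstanceAs (TopologicalSpace (Fin m → Fin n → F))

/-- The compact group `GL(n, O_F)` of `n × n` matrices over `O_F` whose inverse also has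
entries in `O_F`. -/
def GLO (n : ℕ) : Set (Matrix (Fin n) (Fin n) F) :=
  {g | (∀ i j, ‖g i j‖ ≤ 1) ∧ ∃ h : Matrix (Fin n) (Fin n) F,
    (∀ i j, ‖h i j‖ ≤ 1) ∧ g * h = 1 ∧ h * g = 1}

/-- `η` is the normalized Haar measure of the compact group `GL(n, O_F)`, viewed as a
measure on `n × n` matrices over `F`: a probability measure carried by `GL(n, O_F)`,
invariant under left and right translations by elements of `GL(n, O_F)`. -/
def IsHaarGL (n : ℕ) (η : Measure (Matrix (Fin n) (Fin n) F)) : Prop :=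
  IsProbabilityMeasure η ∧ η (GLO F n)ᶜ = 0 ∧
    ∀ g ∈ GLO F n, η.map (fun x => g * x) = η ∧ η.map (fun x => x * g) = η

/-- `m` is the normalized Haar measure of the compact additive group `Mat(n, O_F)`, viewed
as a measure on `n × n` matrices over `F`. -/
def IsHaarMat (n : ℕ) (m : Measure (Matrix (Fin n) (Fin n) F)) : Prop :=
  IsProbabilityMeasure m ∧ m {Y | ¬ ∀ i j, ‖Y i j‖ ≤ 1} = 0 ∧
    ∀ B : Matrix (Fin n) (Fin n) F, (∀ i j, ‖B i j‖ ≤ 1) → m.map (fun Y => B + Y) = m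

/-- The matrix `J = [[0, 1], [-1, 0]]`. -/
def Jmat : Matrix (Fin 2) (Fin 2) F := !![0, 1; -1, 0]

/-- The function `Θ(x) = ∫_{Mat(2, O_F)} χ(x · tr(Y J Yᵗ J)) dY`, where `dY` is the
normalized Haar measure `m2` of `Mat(2, O_F)`. -/
def Theta (χ : AddChar F ℂ) (m2 : Measure (Matrix (Fin 2) (Fin 2) F)) (x : F) : ℂ :=
  ∫ Y, χ (x * Matrix.trace (Y * Jmat F * Yᵀ * Jmat F)) ∂m2

/-- The block-diagonal skew-symmetric matrix `diag(x₁ J, …, xₙ J)` of size `2n × 2n`. -/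
def bdiagJ (n : ℕ) (xs : Fin n → F) : Matrix (Fin (2 * n)) (Fin (2 * n)) F :=
  Matrix.of fun i j : Fin (2 * n) =>
    if (j : ℕ) = (i : ℕ) + 1 ∧ (i : ℕ) % 2 = 0 then xs ⟨(i : ℕ) / 2, by have := i.isLt; omega⟩
    else if (i : ℕ) = (j : ℕ) + 1 ∧ (j : ℕ) % 2 = 0 then
      - xs ⟨(j : ℕ) / 2, by have := j.isLt; omega⟩
    else 0

/-- The infinite matrix `diag(x₀ J, …, x_{r-1} J, 0, 0, …)`. -/
def bdiagJInf (r : ℕ) (xs : ℕ → F) : ℕ → ℕ → F := fun i j =>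
  if i < 2 * r ∧ j < 2 * r then
    (if j = i + 1 ∧ i % 2 = 0 then xs (i / 2)
     else if i = j + 1 ∧ j % 2 = 0 then - xs (j / 2) else 0)
  else 0

/-- Embedding of an `n × n` matrix in the upper-left corner of an infinite matrix,
extended by the identity. -/
def embedG (n : ℕ) (g : Matrix (Fin n) (Fin n) F) : ℕ → ℕ → F := fun i j =>
  if h : i < n ∧ j < n then g ⟨i, h.1⟩ ⟨j, h.2⟩ else idM F i j

/-- Embedding of an `n × n` matrix in the upper-left corner of an infinite matrix,
extended by zero. -/
def embedZ (n : ℕ) (A : Matrix (Fin n) (Fin n) F) : ℕ → ℕ → F := fun i j =>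
  if h : i < n ∧ j < n then A ⟨i, h.1⟩ ⟨j, h.2⟩ else 0

lemma embedZ_isSkew (n : ℕ) (A : Matrix (Fin n) (Fin n) F) (hA : Aᵀ = -A) :
    embedZ F n A ∈ SkewSet F := by
  intro i j
  unfold embedZ
  by_cases h : i < n ∧ j < n
  · have h' : j < n ∧ i < n := ⟨h.2, h.1⟩
    rw [dif_pos h, dif_pos h']
    have := congrFun (congrFun hA ⟨i, h.1⟩) ⟨j, h.2⟩
    simpa [Matrix.transpose_apply] using this
  · have h' : ¬ (j < n ∧ i < n) := fun hc => h ⟨hc.2, hc.1⟩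
    rw [dif_neg h, dif_neg h', neg_zero]

/-- The orbital measure `m_n(A)`: the image of the normalized Haar measure `η` of
`GL(2n, O_F)` under `g ↦ g A gᵗ ∈ Skew(ℕ, F)` (with `A` in the upper-left corner). -/
def orbital (n : ℕ) (η : Measure (Matrix (Fin (2 * n)) (Fin (2 * n)) F))
    (A : Matrix (Fin (2 * n)) (Fin (2 * n)) F) (hA : Aᵀ = -A) : Measure (SkewM F) :=
  η.map fun g => skewAct F (embedG F (2 * n) g) ⟨embedZ F (2 * n) A, embedZ_isSkew F _ A hA⟩

/-- The set of ergodic `GL(∞, O_F)`-invariant Borel probability measures on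
`Skew(ℕ, F)`, inside the space of Borel probability measures with its weak topology. -/
def PergSkew : Set (ProbabilityMeasure (SkewM F)) :=
  {μ | IsInvSkew F (μ : Measure (SkewM F)) ∧ IsErgSkew F (μ : Measure (SkewM F))}


/-- The set of `GL(∞,O_F) × GL(∞,O_F)`-invariant Borel probability measures on `Mat(ℕ, F)`,
with the weak topology. -/
def PinvMat : Set (ProbabilityMeasure (ℕ → ℕ → F)) :=
  {σ | IsInvMat F (σ : Measure (ℕ → ℕ → F))}

/-- The set of `GL(∞,O_F)`-invariant Borel probability measures on `Skew(ℕ, F)`,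
with the weak topology. -/
def PinvSkew : Set (ProbabilityMeasure (SkewM F)) :=
  {μ | IsInvSkew F (μ : Measure (SkewM F))}

/-- The map `A ↦ (A(2i-1, 2i))_{i≥1}` (in 0-indexed form, `A ↦ (A(2i, 2i+1))_{i≥0}`). -/
def cornerSeq (A : SkewM F) : ℕ → F := fun i => A.1 (2 * i) (2 * i + 1)

/-- The group `S(∞)` of finitely supported permutations of `ℕ`. -/
def SPermInf : Set (Equiv.Perm ℕ) := {π | ∃ N, ∀ n, N ≤ n → π n = n}

/-- A Borel measure on `F^ℕ` is invariant under `S(∞)` acting by permutations of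
coordinates. -/
def IsInvSPerm (ν : Measure (ℕ → F)) : Prop :=
  ∀ π ∈ SPermInf, ν.map (fun x => x ∘ π) = ν

/-- The summand `(k + ℓ - ℓ₀) 𝟙_{k + ℓ ≥ ℓ₀}` (as an element of `[0, ∞]`; it vanishes
when `k = -∞`). -/
def deltaTerm (ℓ₀ : ℕ) (ℓ : ℤ) (k : WithBot ℤ) : ℝ≥0∞ :=
  if (0 : WithBot ℤ) ≤ k + (((ℓ - (ℓ₀ : ℤ)) : ℤ) : WithBot ℤ) then
    (((k + (((ℓ - (ℓ₀ : ℤ)) : ℤ) : WithBot ℤ)).unbotD 0).toNat : ℝ≥0∞)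
  else 0

/-- The infinite matrix `diag(x, y, 0, 0, …)`. -/
def diag2 (x y : F) : ℕ → ℕ → F := fun i j =>
  if i = 0 ∧ j = 0 then x else if i = 1 ∧ j = 1 then y else 0

/-- The infinite matrix whose top-left `2 × 2` block is `x · J = [[0, x], [-x, 0]]` and
whose other entries vanish. -/
def JInf (x : F) : ℕ → ℕ → F := fun i j =>
  if i = 0 ∧ j = 1 then x else if i = 1 ∧ j = 0 then -x else 0

/-- The infinite matrix with `(1,1)`-entry `x` and all other entries `0`. -/
def e11 (x : F) : ℕ → ℕ → F := fun i j => if i = 0 ∧ j = 0 then x else 0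


/-!
Induction on `n`. Move an entry `t` of maximal norm of the skew matrix `A` to position `(0, 1)`.
Every entry of `A` is then an `O_F`-multiple of `t`, so the lower-left block `R` can be written
as `X (t J)` with `X` integral, and the unipotent congruence by `[[1, 0], [-X, 1]]` splits off
`t J`, leaving a skew block `S` whose entries are still bounded by `‖t‖`. Writing
`t = u ϖ^(-k)` with `u` a unit, a diagonal congruence replaces `t` by `ϖ^(-k)`. Congruence over
`O_F` preserves bounds on the entries, so the exponents found for `S` by induction are `≤ k`.
-/

section IntegralCongruence

variable {K : Type*} [NormedField K]

lemma norm_mul_apply_le [IsUltrametricDist K] {l m n : Type*} [Fintype m] {M : Matrix l m K}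
    {N : Matrix m n K} {c d : ℝ} (hc : 0 ≤ c) (hd : 0 ≤ d) (hM : ∀ i k, ‖M i k‖ ≤ c)
    (hN : ∀ k j, ‖N k j‖ ≤ d) (i : l) (j : n) :
    ‖(M * N) i j‖ ≤ c * d :=
  IsUltrametricDist.norm_sum_le_of_forall_le_of_nonneg (mul_nonneg hc hd) fun k _ => by
    rw [norm_mul]; exact mul_le_mul (hM i k) (hN k j) (norm_nonneg _) hc

lemma norm_one_apply_le {ι : Type*} [DecidableEq ι] (i j : ι) :
    ‖(1 : Matrix ι ι K) i j‖ ≤ 1 := by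
  rw [Matrix.one_apply]; split <;> simp

section IntegralGL

variable {ι κ : Type*} [Fintype ι] [DecidableEq ι] [Fintype κ] [DecidableEq κ]

-- `GL(ι, O_K)`; for `ι = Fin n` and `K = F` this is `GLO F n` by definition.
variable (ι) in
def integralGL : Set (Matrix ι ι K) :=
  {g | (∀ i j, ‖g i j‖ ≤ 1) ∧
    ∃ h : Matrix ι ι K, (∀ i j, ‖h i j‖ ≤ 1) ∧ g * h = 1 ∧ h * g = 1}

lemma one_mem_integralGL : (1 : Matrix ι ι K) ∈ integralGL ι :=
  ⟨norm_one_apply_le, 1, norm_one_apply_le, mul_one 1, mul_one 1⟩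

lemma mul_mem_integralGL [IsUltrametricDist K] {g h : Matrix ι ι K} (hg : g ∈ integralGL ι)
    (hh : h ∈ integralGL ι) : g * h ∈ integralGL ι := by
  obtain ⟨hg, g', hg', hgg', hg'g⟩ := hg
  obtain ⟨hh, h', hh', hhh', hh'h⟩ := hh
  refine ⟨fun i j => ?_, h' * g', fun i j => ?_, ?_, ?_⟩
  · simpa using norm_mul_apply_le zero_le_one zero_le_one hg hh i j
  · simpa using norm_mul_apply_le zero_le_one zero_le_one hh' hg' i j
  · rw [Matrix.mul_assoc, ← Matrix.mul_assoc h, hhh', Matrix.one_mul, hgg']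
  · rw [Matrix.mul_assoc, ← Matrix.mul_assoc g', hg'g, Matrix.one_mul, hh'h]

lemma diagonal_mem_integralGL {d : ι → K} (hd : ∀ i, ‖d i‖ = 1) :
    Matrix.diagonal d ∈ integralGL ι := by
  have hd0 (i : ι) : d i ≠ 0 := norm_ne_zero_iff.1 (by rw [hd]; exact one_ne_zero)
  refine ⟨fun i j => ?_, Matrix.diagonal fun i => (d i)⁻¹, fun i j => ?_, ?_, ?_⟩
  · rw [Matrix.diagonal_apply]; split <;> simp [hd]
  · rw [Matrix.diagonal_apply]; split <;> simp [hd]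
  · simp [Matrix.diagonal_mul_diagonal, hd0]
  · simp [Matrix.diagonal_mul_diagonal, hd0]

lemma fromBlocks_mem_integralGL {g₁ : Matrix ι ι K} {g₂ : Matrix κ κ K}
    (hg₁ : g₁ ∈ integralGL ι) (hg₂ : g₂ ∈ integralGL κ) :
    Matrix.fromBlocks g₁ 0 0 g₂ ∈ integralGL (ι ⊕ κ) := by
  obtain ⟨hg₁, h₁, hh₁, hgh₁, hhg₁⟩ := hg₁
  obtain ⟨hg₂, h₂, hh₂, hgh₂, hhg₂⟩ := hg₂
  refine ⟨?_, Matrix.fromBlocks h₁ 0 0 h₂, ?_, ?_, ?_⟩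
  · rintro (i | i) (j | j) <;> simp [hg₁, hg₂]
  · rintro (i | i) (j | j) <;> simp [hh₁, hh₂]
  · simp [Matrix.fromBlocks_multiply, hgh₁, hgh₂]
  · simp [Matrix.fromBlocks_multiply, hhg₁, hhg₂]

lemma fromBlocks_one_zero_mem_integralGL {X : Matrix κ ι K} (hX : ∀ i j, ‖X i j‖ ≤ 1) :
    Matrix.fromBlocks 1 0 X 1 ∈ integralGL (ι ⊕ κ) := by
  refine ⟨?_, Matrix.fromBlocks 1 0 (-X) 1, ?_, ?_, ?_⟩
  · rintro (i | i) (j | j) <;> simp [norm_one_apply_le, hX]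
  · rintro (i | i) (j | j) <;> simp [norm_one_apply_le, hX]
  · simp [Matrix.fromBlocks_multiply]
  · simp [Matrix.fromBlocks_multiply]

def IntegralCongr (A B : Matrix ι ι K) : Prop := ∃ g ∈ integralGL ι, A = g * B * gᵀ

namespace IntegralCongr

lemma symm {A B : Matrix ι ι K} (h : IntegralCongr A B) : IntegralCongr B A := by
  obtain ⟨g, ⟨hg, h, hh, hgh, hhg⟩, rfl⟩ := h
  refine ⟨h, ⟨hh, g, hg, hhg, hgh⟩, ?_⟩
  have hT : gᵀ * hᵀ = 1 := by rw [← Matrix.transpose_mul, hhg, Matrix.transpose_one]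
  calc B = h * g * B * (gᵀ * hᵀ) := by rw [hhg, hT, Matrix.one_mul, Matrix.mul_one]
    _ = h * (g * B * gᵀ) * hᵀ := by simp only [Matrix.mul_assoc]

lemma trans [IsUltrametricDist K] {A B C : Matrix ι ι K} (h₁ : IntegralCongr A B)
    (h₂ : IntegralCongr B C) : IntegralCongr A C := by
  obtain ⟨g, hg, rfl⟩ := h₁
  obtain ⟨h, hh, rfl⟩ := h₂
  exact ⟨g * h, mul_mem_integralGL hg hh, by simp only [Matrix.transpose_mul, Matrix.mul_assoc]⟩

lemma transpose_eq_neg {A B : Matrix ι ι K} (h : IntegralCongr A B) (hB : Bᵀ = -B) :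
    Aᵀ = -A := by
  obtain ⟨g, -, rfl⟩ := h
  simp [Matrix.transpose_mul, hB, Matrix.mul_assoc]

lemma norm_apply_le [IsUltrametricDist K] {A B : Matrix ι ι K} {c : ℝ} (h : IntegralCongr A B)
    (hc : 0 ≤ c) (hB : ∀ i j, ‖B i j‖ ≤ c) (i j : ι) : ‖A i j‖ ≤ c := by
  obtain ⟨g, ⟨hg, -⟩, rfl⟩ := h
  have hgB (i j : ι) : ‖(g * B) i j‖ ≤ c := by
    simpa using norm_mul_apply_le zero_le_one hc hg hB i j
  simpa using norm_mul_apply_le hc zero_le_one hgB (N := gᵀ) (fun i j => hg j i) i j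

lemma fromBlocks {A A' : Matrix ι ι K} {B B' : Matrix κ κ K} (hA : IntegralCongr A A')
    (hB : IntegralCongr B B') :
    IntegralCongr (Matrix.fromBlocks A 0 0 B) (Matrix.fromBlocks A' 0 0 B') := by
  obtain ⟨g, hg, rfl⟩ := hA
  obtain ⟨h, hh, rfl⟩ := hB
  exact ⟨_, fromBlocks_mem_integralGL hg hh, by
    simp [Matrix.fromBlocks_transpose, Matrix.fromBlocks_multiply]⟩

lemma of_submatrix {A B : Matrix ι ι K} (e e' : κ ≃ ι)
    (h : IntegralCongr (A.submatrix e e) (B.submatrix e' e')) : IntegralCongr A B := by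
  obtain ⟨g, ⟨hg, h, hh, hgh, hhg⟩, hA⟩ := h
  refine ⟨g.submatrix e.symm e'.symm, ⟨fun i j => hg _ _, h.submatrix e'.symm e.symm,
    fun i j => hh _ _, ?_, ?_⟩, ?_⟩
  · simp [hgh]
  · simp [hhg]
  · calc A = (A.submatrix e e).submatrix e.symm e.symm := by simp
      _ = g.submatrix e.symm e'.symm * (B.submatrix e' e').submatrix e'.symm e'.symm
            * gᵀ.submatrix e'.symm e.symm := by
          rw [hA, Matrix.submatrix_mul_equiv, Matrix.submatrix_mul_equiv]
      _ = _ := by simp [Matrix.transpose_submatrix]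

lemma fromBlocks_zero_of_mul_eq {P : Matrix ι ι K} {Q : Matrix ι κ K}
    {R : Matrix κ ι K} {S : Matrix κ κ K} {X : Matrix κ ι K} (hX : ∀ i j, ‖X i j‖ ≤ 1)
    (hP : Pᵀ = -P) (hRQ : Rᵀ = -Q) (hXP : X * P = R) :
    IntegralCongr (Matrix.fromBlocks P Q R S) (Matrix.fromBlocks P 0 0 (S - R * Xᵀ)) := by
  have hPX : P * Xᵀ = Q := by
    rw [← neg_neg Q, ← hRQ, ← hXP, Matrix.transpose_mul, hP, Matrix.neg_mul, neg_neg]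
  refine ⟨_, fromBlocks_one_zero_mem_integralGL hX, ?_⟩
  simp [Matrix.fromBlocks_transpose, Matrix.fromBlocks_multiply, hPX, hXP]

end IntegralCongr

end IntegralGL

lemma diag_eq_zero_of_transpose_eq_neg {R ι : Type*} [Ring R] [NoZeroDivisors R]
    (h2 : (2 : R) ≠ 0) {A : Matrix ι ι R} (hA : Aᵀ = -A) (i : ι) : A i i = 0 := by
  have h : A i i = -A i i := congrFun₂ hA i i
  have h2A : (2 : R) * A i i = 0 := by rw [two_mul]; exact eq_neg_iff_add_eq_zero.1 h
  exact (mul_eq_zero.1 h2A).resolve_left h2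

lemma exists_ne_forall_norm_apply_le {E ι : Type*} [SeminormedAddGroup E] [Finite ι]
    [Nontrivial ι] {A : Matrix ι ι E} (hA : ∀ i, A i i = 0) :
    ∃ i₀ j₀, i₀ ≠ j₀ ∧ ∀ i j, ‖A i j‖ ≤ ‖A i₀ j₀‖ := by
  obtain ⟨⟨i₀, j₀⟩, hmax⟩ := Finite.exists_max fun p : ι × ι => ‖A p.1 p.2‖
  by_cases h : i₀ = j₀
  · obtain ⟨i₁, j₁, hne⟩ := exists_pair_ne ι
    refine ⟨i₁, j₁, hne, fun i j => ?_⟩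
    have h0 : ‖A i j‖ ≤ 0 := by simpa [h, hA] using hmax (i, j)
    exact h0.trans (norm_nonneg _)
  · exact ⟨i₀, j₀, h, fun i j => hmax (i, j)⟩

-- For `t = 0` the bound forces `R = 0`, which the junk value `R i j / 0 = 0` still solves.
lemma exists_mul_pivotBlock_eq {κ : Type*} (t : K) (R : Matrix κ (Fin 2) K)
    (hR : ∀ i j, ‖R i j‖ ≤ ‖t‖) :
    ∃ X : Matrix κ (Fin 2) K, (∀ i j, ‖X i j‖ ≤ 1) ∧ X * !![0, t; -t, 0] = R := by
  refine ⟨Matrix.of fun i => ![R i 1 / t, -(R i 0 / t)], fun i j => ?_, ?_⟩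
  · fin_cases j <;> simpa using div_le_one_of_le₀ (hR _ _) (norm_nonneg t)
  · by_cases ht : t = 0
    · ext i j
      have : ‖R i j‖ ≤ 0 := by simpa [ht] using hR i j
      simp [ht, norm_le_zero_iff.1 this, Matrix.mul_apply]
    · ext i j
      fin_cases j <;> simp [Matrix.mul_apply, Fin.sum_univ_two, ht]

lemma exists_integralCongr_fromBlocks_pivot [IsUltrametricDist K] {κ : Type*} [Fintype κ]
    [DecidableEq κ] (h2 : (2 : K) ≠ 0) {B : Matrix (Fin 2 ⊕ κ) (Fin 2 ⊕ κ) K}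
    (hB : Bᵀ = -B) (hmax : ∀ i j, ‖B i j‖ ≤ ‖B (.inl 0) (.inl 1)‖) :
    ∃ S : Matrix κ κ K, Sᵀ = -S ∧ (∀ i j, ‖S i j‖ ≤ ‖B (.inl 0) (.inl 1)‖) ∧
      IntegralCongr B
        (Matrix.fromBlocks !![0, B (.inl 0) (.inl 1); -B (.inl 0) (.inl 1), 0] 0 0 S) := by
  set t := B (.inl 0) (.inl 1)
  have hskew (i j) : B j i = -B i j := congrFun₂ hB i j
  have hP : B.toBlocks₁₁ = !![0, t; -t, 0] := by
    ext i j
    fin_cases i <;> fin_cases j <;>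
      simp [Matrix.toBlocks₁₁, diag_eq_zero_of_transpose_eq_neg h2 hB, hskew (.inl 0), t]
  have hPskew : (!![0, t; -t, 0] : Matrix (Fin 2) (Fin 2) K)ᵀ = -!![0, t; -t, 0] := by
    ext i j; fin_cases i <;> fin_cases j <;> simp
  have hRQ : B.toBlocks₂₁ᵀ = -B.toBlocks₁₂ := by
    ext i j; exact hskew _ _
  obtain ⟨X, hX, hXP⟩ := exists_mul_pivotBlock_eq t B.toBlocks₂₁ fun i j => hmax _ _
  have hcongr := IntegralCongr.fromBlocks_zero_of_mul_eq (S := B.toBlocks₂₂) hX hPskew hRQ hXP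
  rw [← hP, Matrix.fromBlocks_toBlocks, hP] at hcongr
  refine ⟨_, ?_, fun i j => ?_, hcongr⟩
  · ext i j
    simpa using congrFun₂ (hcongr.symm.transpose_eq_neg hB) (.inr i) (.inr j)
  · simpa using hcongr.symm.norm_apply_le (norm_nonneg t) hmax (.inr i) (.inr j)

lemma integralCongr_pivotBlock_unit_mul {u : K} (hu : ‖u‖ = 1) (t : K) :
    IntegralCongr (!![0, u * t; -(u * t), 0] : Matrix (Fin 2) (Fin 2) K) !![0, t; -t, 0] := by
  refine ⟨Matrix.diagonal ![u, 1], diagonal_mem_integralGL fun i => ?_, ?_⟩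
  · fin_cases i <;> simp [hu]
  · ext i j
    fin_cases i <;> fin_cases j <;> simp [mul_comm]

end IntegralCongruence

lemma _root_.Equiv.Perm.exists_apply_eq_apply_eq {α : Type*} [DecidableEq α] {a b x y : α}
    (hab : a ≠ b) (hxy : x ≠ y) : ∃ σ : Equiv.Perm α, σ a = x ∧ σ b = y := by
  set b' := Equiv.swap a x b
  have hb'x : b' ≠ x := fun h =>
    hab ((Equiv.swap a x).injective (by rw [Equiv.swap_apply_left]; exact h.symm))
  refine ⟨(Equiv.swap a x).trans (Equiv.swap b' y), ?_, by simp [b']⟩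
  simp [Equiv.swap_apply_of_ne_of_ne hb'x.symm hxy]

lemma _root_.Fin.antitone_cons {α : Type*} [Preorder α] {n : ℕ} {a : α} {f : Fin n → α}
    (hf : Antitone f) (ha : ∀ i, f i ≤ a) : Antitone (Fin.cons a f : Fin (n + 1) → α) := by
  intro i j hij
  cases j using Fin.cases with
  | zero => rw [Fin.le_zero_iff.1 hij]
  | succ j =>
    cases i using Fin.cases with
    | zero => simpa using ha j
    | succ i => simpa using hf (Fin.succ_le_succ_iff.1 hij)

section NormalForm

variable {K : Type} [NontriviallyNormedField K]

@[simp]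
lemma ppow_coe (ϖ : K) (z : ℤ) : ppow K ϖ z = ϖ ^ (-z) := rfl

@[simp]
lemma ppow_bot (ϖ : K) : ppow K ϖ ⊥ = 0 := rfl

lemma norm_ppow_strictMono {ϖ : K} (hϖ0 : ϖ ≠ 0) (hϖ1 : ‖ϖ‖ < 1) :
    StrictMono fun k => ‖ppow K ϖ k‖ := by
  have hρ : 0 < ‖ϖ‖ := norm_pos_iff.2 hϖ0
  refine WithBot.strictMono_iff.2 ⟨fun a b hab => ?_, fun z => ?_⟩
  · simpa [norm_zpow] using zpow_lt_zpow_right_of_lt_one₀ hρ hϖ1 (neg_lt_neg hab)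
  · simpa using zpow_pos hρ z

lemma norm_eq_one_of_norm_uniformizer_lt {ϖ u : K} (hϖ : IsUniformizer K ϖ) (hu : ‖u‖ ≤ 1)
    (hϖu : ‖ϖ‖ < ‖u‖) : ‖u‖ = 1 := by
  refine hu.eq_or_lt.resolve_right fun hu1 => ?_
  obtain ⟨y, hy, rfl⟩ := hϖ.2.2 u hu1
  rw [norm_mul] at hϖu
  exact hϖu.not_ge (mul_le_of_le_one_right (norm_nonneg ϖ) hy)

lemma exists_eq_mul_ppow {ϖ : K} (hϖ : IsUniformizer K ϖ) (x : K) :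
    ∃ u k, ‖u‖ = 1 ∧ x = u * ppow K ϖ k := by
  by_cases hx : x = 0
  · exact ⟨1, ⊥, norm_one, by simp [hx]⟩
  have hρ : 0 < ‖ϖ‖ := norm_pos_iff.2 hϖ.1
  obtain ⟨m, hm⟩ := exists_mem_Ioc_zpow (norm_pos_iff.2 hx) ((one_lt_inv₀ hρ).2 hϖ.2.1)
  have hu : ‖x * ϖ ^ (m + 1)‖ = ‖x‖ * ‖ϖ‖ ^ (m + 1) := by rw [norm_mul, norm_zpow]
  refine ⟨x * ϖ ^ (m + 1), ((m + 1 : ℤ) : WithBot ℤ),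
    norm_eq_one_of_norm_uniformizer_lt hϖ ?_ ?_, ?_⟩
  · calc ‖x * ϖ ^ (m + 1)‖ ≤ ‖ϖ‖⁻¹ ^ (m + 1) * ‖ϖ‖ ^ (m + 1) :=
          hu ▸ mul_le_mul_of_nonneg_right hm.2 (by positivity)
      _ = 1 := by rw [_root_.inv_zpow, inv_mul_cancel₀ (by positivity)]
  · calc ‖ϖ‖ = ‖ϖ‖⁻¹ ^ m * ‖ϖ‖ ^ (m + 1) := by
          rw [_root_.inv_zpow, zpow_add_one₀ hρ.ne', ← mul_assoc,
            inv_mul_cancel₀ (by positivity), one_mul]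
      _ < ‖x * ϖ ^ (m + 1)‖ := hu ▸ mul_lt_mul_of_pos_right hm.1 (by positivity)
  · rw [ppow_coe, mul_assoc, ← zpow_add₀ hϖ.1, add_neg_cancel, zpow_zero, mul_one]

lemma bdiagJ_apply_two_mul {n : ℕ} (xs : Fin n → K) (m : Fin n) :
    bdiagJ K n xs ⟨2 * m, by omega⟩ ⟨2 * m + 1, by omega⟩ = xs m := by
  simp [bdiagJ]

def finTwoSumEquiv (n : ℕ) : Fin 2 ⊕ Fin (2 * n) ≃ Fin (2 * (n + 1)) :=
  finSumFinEquiv.trans (finCongr (by omega))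

lemma bdiagJ_succ_submatrix {n : ℕ} (xs : Fin (n + 1) → K) :
    (bdiagJ K (n + 1) xs).submatrix (finTwoSumEquiv n) (finTwoSumEquiv n) =
      Matrix.fromBlocks !![0, xs 0; -xs 0, 0] 0 0 (bdiagJ K n (Fin.tail xs)) := by
  ext (i | i) (j | j)
  · fin_cases i <;> fin_cases j <;> simp [bdiagJ, finTwoSumEquiv]
  · have := i.isLt
    simp [bdiagJ, finTwoSumEquiv]
    split_ifs <;> first | rfl | omega
  · have := j.isLt
    simp [bdiagJ, finTwoSumEquiv]
    split_ifs <;> first | rfl | omega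
  · simp [bdiagJ, finTwoSumEquiv, Fin.tail, Fin.succ_mk]

theorem exists_integralCongr_bdiagJ [IsUltrametricDist K] (h2 : (2 : K) ≠ 0) {ϖ : K}
    (hϖ : IsUniformizer K ϖ) :
    ∀ {n : ℕ} (A : Matrix (Fin (2 * n)) (Fin (2 * n)) K), Aᵀ = -A →
      ∃ k : Fin n → WithBot ℤ, Antitone k ∧
        IntegralCongr A (bdiagJ K n fun m => ppow K ϖ (k m))
  | 0, A, _ =>
    ⟨Fin.elim0, fun i => i.elim0, ⟨1, one_mem_integralGL, Matrix.ext fun i => i.elim0⟩⟩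
  | n + 1, A, hA => by
    have : Nontrivial (Fin (2 * (n + 1))) := Fin.nontrivial_iff_two_le.2 (by omega)
    obtain ⟨i₀, j₀, hij, hmax⟩ :=
      exists_ne_forall_norm_apply_le (diag_eq_zero_of_transpose_eq_neg h2 hA)
    obtain ⟨σ, hσ₀, hσ₁⟩ := Equiv.Perm.exists_apply_eq_apply_eq
      ((finTwoSumEquiv n).injective.ne (Sum.inl_injective.ne zero_ne_one)) hij
    set e := (finTwoSumEquiv n).trans σ
    have he₀ : e (.inl 0) = i₀ := hσ₀
    have he₁ : e (.inl 1) = j₀ := hσ₁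
    obtain ⟨S, hS, hSmax, hBS⟩ := exists_integralCongr_fromBlocks_pivot h2
      (B := A.submatrix e e) (by rw [Matrix.transpose_submatrix, hA]; rfl)
      (fun i j => by simpa [he₀, he₁] using hmax (e i) (e j))
    obtain ⟨u, k₁, hu, ha⟩ := exists_eq_mul_ppow hϖ (A i₀ j₀)
    obtain ⟨k', hk', hSk'⟩ := exists_integralCongr_bdiagJ h2 hϖ S hS
    have hk'k₁ (m : Fin n) : k' m ≤ k₁ := by
      refine (norm_ppow_strictMono hϖ.1 hϖ.2.1).le_iff_le.1 ?_
      have := hSk'.symm.norm_apply_le (norm_nonneg _) hSmax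
        ⟨2 * m, by omega⟩ ⟨2 * m + 1, by omega⟩
      simpa [bdiagJ_apply_two_mul, he₀, he₁, ha, hu] using this
    refine ⟨Fin.cons k₁ k', Fin.antitone_cons hk' hk'k₁,
      IntegralCongr.of_submatrix e (finTwoSumEquiv n) ?_⟩
    rw [bdiagJ_succ_submatrix]
    refine hBS.trans ?_
    simp only [Matrix.submatrix_apply, he₀, he₁, ha, Fin.cons_zero]
    exact (integralCongr_pivotBlock_unit_mul hu _).fromBlocks hSk'

end NormalForm

/-- Every `A ∈ Skew(2n, F)` can be written as `A = g · diag(ϖ^{-k₁}J, …, ϖ^{-kₙ}J) · gᵗ` with `g ∈ GL(2n, O_F)` and `k₁ ≥ k₂ ≥ … ≥ kₙ`, `kᵢ ∈ ℤ ∪ {-∞}`. -/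
theorem skew_normal_form (h2 : (2 : F) ≠ 0) (ϖ : F) (hϖ : IsUniformizer F ϖ) (n : ℕ)
    (A : Matrix (Fin (2 * n)) (Fin (2 * n)) F) (hA : Aᵀ = -A) :
    ∃ (g : Matrix (Fin (2 * n)) (Fin (2 * n)) F) (k : Fin n → WithBot ℤ),
      Antitone k ∧ g ∈ GLO F (2 * n) ∧
      A = g * bdiagJ F n (fun m => ppow F ϖ (k m)) * gᵀ := by
  obtain ⟨k, hk, g, hg, hAg⟩ := exists_integralCongr_bdiagJ h2 hϖ A hA
  exact ⟨g, k, hk, hg, hAg⟩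

end SkewPaper
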